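/- Let [x,y] be a MUPS of S and [s,t] an interval with y ≤ t. If S[x-(t-y)..t] is a palindrome, then S[x-(t-y)..t] is a unique palindromic substring of S containing [s',t] for any s' ≥ x-(t-y); in particular, extending a MUPS symmetrically about its center preserves uniqueness. -/

import Mathlib

/-!
Shifting by the offset of a nonempty infix `u` of `v` maps the occurrences of `v` injectively to
occurrences of `u`, so a string containing a unique substring is itself unique. The palindrome
`S[x-(t-y)..t]` contains the MUPS `S[x..y]`, hence occurs exactly once.
-/

/-- `sub S i j` is the substring `S[i..j]`, 1-indexed and inclusive. -/
def sub (S : List Char) (i j : ℕ) : List Char := (S.drop (i-1)).take (j+1-i)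

/-- A string is a palindrome if it equals its reversal. -/
def isPal (w : List Char) : Prop := w.reverse = w

/-- The set of (1-indexed) occurrence positions of `w` in `S`. -/
def occs (S w : List Char) : Finset ℕ :=
  (Finset.Icc 1 S.length).filter (fun p => sub S p (p + w.length - 1) = w)

/-- `w` occurs exactly once in `S`. -/
def uniqueIn (S w : List Char) : Prop := (occs S w).card = 1

/-- `[i,j]` is (the interval of) a unique palindromic substring of `S`. -/
def UPS (S : List Char) (i j : ℕ) : Prop :=
  1 ≤ i ∧ i ≤ j ∧ j ≤ S.length ∧ isPal (sub S i j) ∧ uniqueIn S (sub S i j)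

/-- `[i,j]` is a minimal unique palindromic substring of `S`. -/
def MUPS (S : List Char) (i j : ℕ) : Prop :=
  UPS S i j ∧ (j + 1 - i ≤ 2 ∨ 2 ≤ (occs S (sub S (i+1) (j-1))).card)

/-- `[i,j]` is a shortest unique palindromic substring of `S` for the query `[s,t]`. -/
def SUPS (S : List Char) (s t i j : ℕ) : Prop :=
  UPS S i j ∧ i ≤ s ∧ s ≤ t ∧ t ≤ j ∧
    ∀ i' j', UPS S i' j' → i' ≤ s → t ≤ j' → j - i ≤ j' - i'

theorem length_sub (S : List Char) (i j : ℕ) :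
    (sub S i j).length = min (j + 1 - i) (S.length - (i - 1)) := by
  simp [sub]

theorem mem_occs {S w : List Char} {p : ℕ} :
    p ∈ occs S w ↔ (1 ≤ p ∧ p ≤ S.length) ∧ w <+: S.drop (p - 1) := by
  rw [occs, Finset.mem_filter, Finset.mem_Icc, List.prefix_iff_eq_take]
  refine and_congr_right fun hp => ?_
  rw [sub, show p + w.length - 1 + 1 - p = w.length by omega, eq_comm]

theorem mem_occs_sub {S : List Char} {i j : ℕ} (hi : 1 ≤ i) (hij : i ≤ j) (hj : j ≤ S.length) :
    i ∈ occs S (sub S i j) :=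
  mem_occs.2 ⟨⟨hi, by omega⟩, List.take_prefix _ _⟩

theorem sub_isInfix_sub {S : List Char} {i j i' j' : ℕ} (hi : 1 ≤ i) (hii' : i ≤ i')
    (hj'j : j' ≤ j) : sub S i' j' <:+: sub S i j := by
  have h : sub S i' j' = ((sub S i j).drop (i' - i)).take (j' + 1 - i') := by
    simp only [sub, List.drop_take, List.drop_drop, List.take_take]
    rw [show i - 1 + (i' - i) = i' - 1 by omega, min_eq_left (by omega)]
  rw [h]
  exact (List.take_prefix _ _).isInfix.trans (List.drop_suffix _ _).isInfix

theorem card_occs_le_of_isInfix {S u v : List Char} (hu : u ≠ []) (huv : u <:+: v) :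
    (occs S v).card ≤ (occs S u).card := by
  obtain ⟨a, b, rfl⟩ := huv
  refine Finset.card_le_card_of_injOn (· + a.length) (fun p hp => ?_)
    (fun p _ q _ h => Nat.add_right_cancel h)
  obtain ⟨⟨hp1, -⟩, r, hr⟩ := mem_occs.1 hp
  have hdrop : u ++ (b ++ r) = S.drop (p + a.length - 1) := by
    rw [show p + a.length - 1 = p - 1 + a.length by omega, ← List.drop_drop, ← hr]
    simp
  have hlen := congrArg List.length hdrop
  have hu_pos := List.length_pos_iff.2 hu
  simp only [List.length_append, List.length_drop] at hlen
  show p + a.length ∈ occs S u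
  exact mem_occs.2 ⟨⟨by omega, by omega⟩, ⟨b ++ r, hdrop⟩⟩

theorem uniqueIn_sub_of_isInfix {S u : List Char} {i j : ℕ} (hi : 1 ≤ i) (hij : i ≤ j)
    (hj : j ≤ S.length) (hu : u ≠ []) (huniq : uniqueIn S u) (hinf : u <:+: sub S i j) :
    uniqueIn S (sub S i j) := by
  have hle := card_occs_le_of_isInfix (S := S) hu hinf
  have hpos := Finset.card_pos.2 ⟨i, mem_occs_sub hi hij hj⟩
  unfold uniqueIn at *
  omega

theorem UPS.extend_of_isPal {S : List Char} {x y i j : ℕ} (h : UPS S x y) (hi : 1 ≤ i)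
    (hix : i ≤ x) (hyj : y ≤ j) (hj : j ≤ S.length) (hpal : isPal (sub S i j)) :
    UPS S i j := by
  obtain ⟨hx, hxy, hy, -, huniq⟩ := h
  have hne : sub S x y ≠ [] := by
    rw [← List.length_pos_iff, length_sub]
    omega
  exact ⟨hi, by omega, hj, hpal,
    uniqueIn_sub_of_isInfix hi (by omega) hj hne huniq (sub_isInfix_sub hi hix hyj)⟩

theorem stmt16_general (S : List Char) (x y t : ℕ)
    (hm : MUPS S x y) (hyt : y ≤ t) (ht : t ≤ S.length)
    (hx : t - y < x)
    (hpal : isPal (sub S (x - (t - y)) t)) :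
    UPS S (x - (t - y)) t ∧
      ∀ s', x - (t - y) ≤ s' → s' ≤ t → x - (t - y) ≤ s' ∧ t ≤ t :=
  ⟨hm.1.extend_of_isPal (by omega) (Nat.sub_le _ _) hyt ht hpal,
    fun _ hs' _ => ⟨hs', le_rfl⟩⟩

theorem stmt16 (S : List Char) (x y s t : ℕ)
    (hm : MUPS S x y) (hyt : y ≤ t) (ht : t ≤ S.length)
    (hx : t - y < x)
    (hpal : isPal (sub S (x - (t - y)) t)) :
    UPS S (x - (t - y)) t ∧
      ∀ s', x - (t - y) ≤ s' → s' ≤ t → x - (t - y) ≤ s' ∧ t ≤ t :=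
  stmt16_general S x y t hm hyt ht hx hpal
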